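/- Suppose the real 4×4 matrix R has Lorentz singular values s0 ≥ s1 ≥ s2 ≥ |s3|. Then the infimum over all pairs of proper orthochronous Lorentz matrices L1, L2 of Tr(L1 · R · L2ᵀ) equals s0 − s1 − s2 + s3, and this infimum is attained. -/
import Mathlib


open Matrix

noncomputable section

/-- The Minkowski metric η = diag(1,-1,-1,-1). -/
def η : Matrix (Fin 4) (Fin 4) ℝ := Matrix.diagonal ![1, -1, -1, -1]

/-- A proper orthochronous Lorentz matrix. -/
def LorentzPO (L : Matrix (Fin 4) (Fin 4) ℝ) : Prop :=
  Lᵀ * η * L = η ∧ L.det = 1 ∧ 1 ≤ L 0 0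

/-- `R` has Lorentz singular values `s 0 ≥ s 1 ≥ s 2 ≥ |s 3|`. -/
def HasLSV (R : Matrix (Fin 4) (Fin 4) ℝ) (s : Fin 4 → ℝ) : Prop :=
  s 1 ≤ s 0 ∧ s 2 ≤ s 1 ∧ |s 3| ≤ s 2 ∧
  ∃ L1 L2 : Matrix (Fin 4) (Fin 4) ℝ, LorentzPO L1 ∧ LorentzPO L2 ∧
    R = L1 * Matrix.diagonal s * L2ᵀ

theorem det_fin_four' (M : Matrix (Fin 4) (Fin 4) ℝ) :
    M.det =
      M 0 0 * (M 1 1 * M 2 2 * M 3 3 - M 1 1 * M 2 3 * M 3 2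
        - M 1 2 * M 2 1 * M 3 3 + M 1 2 * M 2 3 * M 3 1
        + M 1 3 * M 2 1 * M 3 2 - M 1 3 * M 2 2 * M 3 1)
      - M 0 1 * (M 1 0 * M 2 2 * M 3 3 - M 1 0 * M 2 3 * M 3 2
        - M 1 2 * M 2 0 * M 3 3 + M 1 2 * M 2 3 * M 3 0
        + M 1 3 * M 2 0 * M 3 2 - M 1 3 * M 2 2 * M 3 0)
      + M 0 2 * (M 1 0 * M 2 1 * M 3 3 - M 1 0 * M 2 3 * M 3 1
        - M 1 1 * M 2 0 * M 3 3 + M 1 1 * M 2 3 * M 3 0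
        + M 1 3 * M 2 0 * M 3 1 - M 1 3 * M 2 1 * M 3 0)
      - M 0 3 * (M 1 0 * M 2 1 * M 3 2 - M 1 0 * M 2 2 * M 3 1
        - M 1 1 * M 2 0 * M 3 2 + M 1 1 * M 2 2 * M 3 0
        + M 1 2 * M 2 0 * M 3 1 - M 1 2 * M 2 1 * M 3 0) := by
  rw [Matrix.det_succ_row_zero, Fin.sum_univ_four]
  simp [Matrix.det_fin_three, Matrix.submatrix_apply, Fin.succ, Fin.succAbove, Fin.lt_def,
    show ((3:Fin 4):ℕ) = 3 from rfl, Fin.castSucc, Fin.castAdd, Fin.castLE]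
  ring

lemma orth3_scalar (c p00 p01 p02 p10 p11 p12 p20 p21 p22 : ℝ) (hc : 0 < c)
    (h00 : p00*p00 + p10*p10 + p20*p20 = c^2)
    (h11 : p01*p01 + p11*p11 + p21*p21 = c^2)
    (h22 : p02*p02 + p12*p12 + p22*p22 = c^2) :
    -(3*c) ≤ p00 + p11 + p22 := by
  nlinarith [sq_nonneg p10, sq_nonneg p20, sq_nonneg p01, sq_nonneg p21,
    sq_nonneg p02, sq_nonneg p12, sq_nonneg (p00 + c), sq_nonneg (p11 + c),
    sq_nonneg (p22 + c), hc.le]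

lemma so3_scalar (c p00 p01 p02 p10 p11 p12 p20 p21 p22 : ℝ) (hc : 0 < c)
    (h00 : p00*p00 + p10*p10 + p20*p20 = c^2)
    (h01 : p00*p01 + p10*p11 + p20*p21 = 0)
    (h02 : p00*p02 + p10*p12 + p20*p22 = 0)
    (h11 : p01*p01 + p11*p11 + p21*p21 = c^2)
    (h12 : p01*p02 + p11*p12 + p21*p22 = 0)
    (h22 : p02*p02 + p12*p12 + p22*p22 = c^2)
    (hdet : p00*p11*p22 - p00*p12*p21 - p01*p10*p22 + p01*p12*p20 + p02*p10*p21 - p02*p11*p20 = c^3) :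
    -c ≤ p00 + p11 + p22 := by
  have key : c^2 * ((c + (p00+p11+p22)) * (3*c - (p00+p11+p22)))
      = c^2 * ((p01-p10)^2 + (p02-p20)^2 + (p12-p21)^2) := by
    linear_combination (norm := ring_nf)
      (-c^2 + 2*p11*p22 - 2*p12*p21) * h00
      + (-2*p01*p22 + 2*p02*p21 - 2*p10*p22 + 2*p12*p20) * h01
      + (2*p01*p12 - 2*p02*p11 + 2*p10*p21 - 2*p11*p20) * h02
      + (-c^2 + 2*p00*p22 - 2*p02*p20) * h11
      + (-2*p00*p12 - 2*p00*p21 + 2*p01*p20 + 2*p02*p10) * h12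
      + (-c^2 + 2*p00*p11 - 2*p01*p10) * h22
      + (-2*(p00+p11+p22)) * hdet
  by_contra hcon
  push_neg at hcon
  have h1 : 0 < -(c + (p00+p11+p22)) := by linarith
  have h2 : 0 < 3*c - (p00+p11+p22) := by linarith
  have h3 := mul_pos (mul_pos (mul_pos hc hc) h1) h2
  have h4 : 0 ≤ c^2 * ((p01-p10)^2 + (p02-p20)^2 + (p12-p21)^2) := by positivity
  nlinarith [key]


lemma gram_sq (p00 p01 p02 p10 p11 p12 p20 p21 p22 g00 g01 g02 g11 g12 g22 : ℝ)
    (h00 : p00*p00 + p10*p10 + p20*p20 = g00)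
    (h01 : p00*p01 + p10*p11 + p20*p21 = g01)
    (h02 : p00*p02 + p10*p12 + p20*p22 = g02)
    (h11 : p01*p01 + p11*p11 + p21*p21 = g11)
    (h12 : p01*p02 + p11*p12 + p21*p22 = g12)
    (h22 : p02*p02 + p12*p12 + p22*p22 = g22) :
    (p00*p11*p22 - p00*p12*p21 - p01*p10*p22 + p01*p12*p20 + p02*p10*p21 - p02*p11*p20)^2
      = g00*g11*g22 - g00*g12*g12 - g01*g01*g22 + 2*g01*g02*g12 - g02*g02*g11 := by
  linear_combination (norm := ring_nf) ((1) * (p01*p01 + p11*p11 + p21*p21) * (p02*p02 + p12*p12 + p22*p22) + (-1) * (p01*p02 + p11*p12 + p21*p22) * (p01*p02 + p11*p12 + p21*p22)) * h00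
      + ((-1) * (p00*p01 + p10*p11 + p20*p21) * (p02*p02 + p12*p12 + p22*p22) + (-1) * g01 * (p02*p02 + p12*p12 + p22*p22) + (2) * (p00*p02 + p10*p12 + p20*p22) * (p01*p02 + p11*p12 + p21*p22)) * h01
      + ((2) * g01 * (p01*p02 + p11*p12 + p21*p22) + (-1) * (p00*p02 + p10*p12 + p20*p22) * (p01*p01 + p11*p11 + p21*p21) + (-1) * g02 * (p01*p01 + p11*p11 + p21*p21)) * h02
      + ((1) * g00 * (p02*p02 + p12*p12 + p22*p22) + (-1) * g02 * g02) * h11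
      + ((-1) * g00 * (p01*p02 + p11*p12 + p21*p22) + (-1) * g00 * g12 + (2) * g01 * g02) * h12
      + ((1) * g00 * g11 + (-1) * g01 * g01) * h22


lemma det_pick (g DA DP : ℝ) (h0 : 1 ≤ g) (hA : DA^2 = g^2)
    (hlin : DP = (1+g)^2 * (DA + 1)) (hsq : DP^2 = (1+g)^6) : DP = (1+g)^3 := by
  have hcase : (DA - g) * (DA + g) = 0 := by linear_combination hA
  rcases mul_eq_zero.mp hcase with hq | hq
  · rw [hlin]; linear_combination ((1+g)^2) * hq
  · exfalso
    have hDA : DA = -g := by linarith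
    rw [hlin, hDA] at hsq
    have key : (1+g)^4 * (4*g) = 0 := by linear_combination -hsq
    have h4 : (0:ℝ) < (1+g)^4 := by positivity
    nlinarith [key, h4, h0]

lemma trace_final_strong (g a S : ℝ) (h0 : 1 ≤ g) (hcs : -(g*g - 1) ≤ S)
    (hge : -(1+g) ≤ (1+g)*a - S) : 0 ≤ g + a := by
  have hc : (0:ℝ) < 1 + g := by linarith
  by_contra hcon
  push_neg at hcon
  nlinarith [mul_pos hc (show 0 < -(g+a) by linarith), hcs, hge]

lemma trace_final_weak (g a S : ℝ) (h0 : 1 ≤ g) (hcs : -(g*g - 1) ≤ S)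
    (hge : -(3*(1+g)) ≤ (1+g)*a - S) : -2 ≤ g + a := by
  have hc : (0:ℝ) < 1 + g := by linarith
  by_contra hcon
  push_neg at hcon
  nlinarith [mul_pos hc (show 0 < -(g+a+2) by linarith), hcs, hge]

set_option maxHeartbeats 1000000 in
lemma lorentz_trace (M : Matrix (Fin 4) (Fin 4) ℝ) (hL : Mᵀ * η * M = η)
    (hR : M * η * Mᵀ = η) (h0 : 1 ≤ M 0 0) :
    -2 ≤ M.trace ∧ (M.det = 1 → 0 ≤ M.trace) := by
  have e := fun k l => Matrix.ext_iff.mpr hL k l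
  have f := fun k l => Matrix.ext_iff.mpr hR k l
  have e00 := e 0 0; have e01 := e 0 1; have e02 := e 0 2; have e03 := e 0 3
  have e11 := e 1 1; have e12 := e 1 2; have e13 := e 1 3
  have e22 := e 2 2; have e23 := e 2 3; have e33 := e 3 3
  have f00 := f 0 0
  clear e f
  simp [Matrix.mul_apply, η, Matrix.diagonal_apply, Fin.sum_univ_four] at e00 e01 e02 e03 e11 e12 e13 e22 e23 e33 f00
  have E00 : M 1 0*M 1 0 + M 2 0*M 2 0 + M 3 0*M 3 0 = M 0 0*M 0 0 - 1 := by linear_combination -e00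
  have E01 : M 1 0*M 1 1 + M 2 0*M 2 1 + M 3 0*M 3 1 = M 0 0*M 0 1 := by linear_combination -e01
  have E02 : M 1 0*M 1 2 + M 2 0*M 2 2 + M 3 0*M 3 2 = M 0 0*M 0 2 := by linear_combination -e02
  have E03 : M 1 0*M 1 3 + M 2 0*M 2 3 + M 3 0*M 3 3 = M 0 0*M 0 3 := by linear_combination -e03
  have E11 : M 1 1*M 1 1 + M 2 1*M 2 1 + M 3 1*M 3 1 = 1 + M 0 1*M 0 1 := by linear_combination -e11
  have E12 : M 1 1*M 1 2 + M 2 1*M 2 2 + M 3 1*M 3 2 = M 0 1*M 0 2 := by linear_combination -e12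
  have E13 : M 1 1*M 1 3 + M 2 1*M 2 3 + M 3 1*M 3 3 = M 0 1*M 0 3 := by linear_combination -e13
  have E22 : M 1 2*M 1 2 + M 2 2*M 2 2 + M 3 2*M 3 2 = 1 + M 0 2*M 0 2 := by linear_combination -e22
  have E23 : M 1 2*M 1 3 + M 2 2*M 2 3 + M 3 2*M 3 3 = M 0 2*M 0 3 := by linear_combination -e23
  have E33 : M 1 3*M 1 3 + M 2 3*M 2 3 + M 3 3*M 3 3 = 1 + M 0 3*M 0 3 := by linear_combination -e33
  have F00 : M 0 1*M 0 1 + M 0 2*M 0 2 + M 0 3*M 0 3 = M 0 0*M 0 0 - 1 := by linear_combination -f00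
  clear e00 e01 e02 e03 e11 e12 e13 e22 e23 e33 f00
  have hc : (0:ℝ) < 1 + M 0 0 := by linarith
  have lag : (M 0 0*M 0 0 - 1)*(M 0 0*M 0 0 - 1)
      - (M 1 0*M 0 1 + M 2 0*M 0 2 + M 3 0*M 0 3)^2
      = (M 1 0*M 0 2 - M 2 0*M 0 1)^2 + (M 1 0*M 0 3 - M 3 0*M 0 1)^2
        + (M 2 0*M 0 3 - M 3 0*M 0 2)^2 := by
    linear_combination (-(M 0 0*M 0 0-1))*F00 - (M 0 1*M 0 1 + M 0 2*M 0 2 + M 0 3*M 0 3)*E00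
  have hcs : -(M 0 0*M 0 0 - 1) ≤ M 1 0*M 0 1 + M 2 0*M 0 2 + M 3 0*M 0 3 := by
    nlinarith [lag, sq_nonneg (M 1 0*M 0 2 - M 2 0*M 0 1), sq_nonneg (M 1 0*M 0 3 - M 3 0*M 0 1),
      sq_nonneg (M 2 0*M 0 3 - M 3 0*M 0 2), h0,
      sq_nonneg (M 1 0*M 0 1 + M 2 0*M 0 2 + M 3 0*M 0 3 - (M 0 0*M 0 0 - 1))]
  clear lag
  have h00 : ((1 + M 0 0) * M 1 1 - M 1 0 * M 0 1)*((1 + M 0 0) * M 1 1 - M 1 0 * M 0 1) + ((1 + M 0 0) * M 2 1 - M 2 0 * M 0 1)*((1 + M 0 0) * M 2 1 - M 2 0 * M 0 1) + ((1 + M 0 0) * M 3 1 - M 3 0 * M 0 1)*((1 + M 0 0) * M 3 1 - M 3 0 * M 0 1) = (1 + M 0 0)^2 := by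
    linear_combination ((1+M 0 0)^2)*E11 - 2*(1+M 0 0)*(M 0 1)*E01 + (M 0 1*M 0 1)*E00
  have h01 : ((1 + M 0 0) * M 1 1 - M 1 0 * M 0 1)*((1 + M 0 0) * M 1 2 - M 1 0 * M 0 2) + ((1 + M 0 0) * M 2 1 - M 2 0 * M 0 1)*((1 + M 0 0) * M 2 2 - M 2 0 * M 0 2) + ((1 + M 0 0) * M 3 1 - M 3 0 * M 0 1)*((1 + M 0 0) * M 3 2 - M 3 0 * M 0 2) = 0 := by
    linear_combination ((1+M 0 0)^2)*E12 - (1+M 0 0)*(M 0 1)*E02 - (1+M 0 0)*(M 0 2)*E01 + (M 0 1*M 0 2)*E00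
  have h02 : ((1 + M 0 0) * M 1 1 - M 1 0 * M 0 1)*((1 + M 0 0) * M 1 3 - M 1 0 * M 0 3) + ((1 + M 0 0) * M 2 1 - M 2 0 * M 0 1)*((1 + M 0 0) * M 2 3 - M 2 0 * M 0 3) + ((1 + M 0 0) * M 3 1 - M 3 0 * M 0 1)*((1 + M 0 0) * M 3 3 - M 3 0 * M 0 3) = 0 := by
    linear_combination ((1+M 0 0)^2)*E13 - (1+M 0 0)*(M 0 1)*E03 - (1+M 0 0)*(M 0 3)*E01 + (M 0 1*M 0 3)*E00
  have h11 : ((1 + M 0 0) * M 1 2 - M 1 0 * M 0 2)*((1 + M 0 0) * M 1 2 - M 1 0 * M 0 2) + ((1 + M 0 0) * M 2 2 - M 2 0 * M 0 2)*((1 + M 0 0) * M 2 2 - M 2 0 * M 0 2) + ((1 + M 0 0) * M 3 2 - M 3 0 * M 0 2)*((1 + M 0 0) * M 3 2 - M 3 0 * M 0 2) = (1 + M 0 0)^2 := by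
    linear_combination ((1+M 0 0)^2)*E22 - 2*(1+M 0 0)*(M 0 2)*E02 + (M 0 2*M 0 2)*E00
  have h12 : ((1 + M 0 0) * M 1 2 - M 1 0 * M 0 2)*((1 + M 0 0) * M 1 3 - M 1 0 * M 0 3) + ((1 + M 0 0) * M 2 2 - M 2 0 * M 0 2)*((1 + M 0 0) * M 2 3 - M 2 0 * M 0 3) + ((1 + M 0 0) * M 3 2 - M 3 0 * M 0 2)*((1 + M 0 0) * M 3 3 - M 3 0 * M 0 3) = 0 := by
    linear_combination ((1+M 0 0)^2)*E23 - (1+M 0 0)*(M 0 2)*E03 - (1+M 0 0)*(M 0 3)*E02 + (M 0 2*M 0 3)*E00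
  have h22 : ((1 + M 0 0) * M 1 3 - M 1 0 * M 0 3)*((1 + M 0 0) * M 1 3 - M 1 0 * M 0 3) + ((1 + M 0 0) * M 2 3 - M 2 0 * M 0 3)*((1 + M 0 0) * M 2 3 - M 2 0 * M 0 3) + ((1 + M 0 0) * M 3 3 - M 3 0 * M 0 3)*((1 + M 0 0) * M 3 3 - M 3 0 * M 0 3) = (1 + M 0 0)^2 := by
    linear_combination ((1+M 0 0)^2)*E33 - 2*(1+M 0 0)*(M 0 3)*E03 + (M 0 3*M 0 3)*E00
  have hgA := gram_sq _ _ _ _ _ _ _ _ _ _ _ _ _ _ _ E11 E12 E13 E22 E23 E33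
  have hgP := gram_sq _ _ _ _ _ _ _ _ _ _ _ _ _ _ _ h00 h01 h02 h11 h12 h22
  have hdetPlin : (((1 + M 0 0) * M 1 1 - M 1 0 * M 0 1)*((1 + M 0 0) * M 2 2 - M 2 0 * M 0 2)*((1 + M 0 0) * M 3 3 - M 3 0 * M 0 3) - ((1 + M 0 0) * M 1 1 - M 1 0 * M 0 1)*((1 + M 0 0) * M 2 3 - M 2 0 * M 0 3)*((1 + M 0 0) * M 3 2 - M 3 0 * M 0 2) - ((1 + M 0 0) * M 1 2 - M 1 0 * M 0 2)*((1 + M 0 0) * M 2 1 - M 2 0 * M 0 1)*((1 + M 0 0) * M 3 3 - M 3 0 * M 0 3) + ((1 + M 0 0) * M 1 2 - M 1 0 * M 0 2)*((1 + M 0 0) * M 2 3 - M 2 0 * M 0 3)*((1 + M 0 0) * M 3 1 - M 3 0 * M 0 1) + ((1 + M 0 0) * M 1 3 - M 1 0 * M 0 3)*((1 + M 0 0) * M 2 1 - M 2 0 * M 0 1)*((1 + M 0 0) * M 3 2 - M 3 0 * M 0 2) - ((1 + M 0 0) * M 1 3 - M 1 0 * M 0 3)*((1 + M 0 0) * M 2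 2 - M 2 0 * M 0 2)*((1 + M 0 0) * M 3 1 - M 3 0 * M 0 1)) = (1 + M 0 0)^2 * ((M 1 1*M 2 2*M 3 3 - M 1 1*M 2 3*M 3 2 - M 1 2*M 2 1*M 3 3 + M 1 2*M 2 3*M 3 1 + M 1 3*M 2 1*M 3 2 - M 1 3*M 2 2*M 3 1) + M.det) := by
    rw [det_fin_four' M]; ring
  have heq : ((1 + M 0 0) * M 1 1 - M 1 0 * M 0 1) + ((1 + M 0 0) * M 2 2 - M 2 0 * M 0 2) + ((1 + M 0 0) * M 3 3 - M 3 0 * M 0 3)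
      = (1 + M 0 0)*(M 1 1 + M 2 2 + M 3 3) - (M 1 0*M 0 1 + M 2 0*M 0 2 + M 3 0*M 0 3) := by
    ring
  obtain ⟨DA, hDA⟩ : ∃ x : ℝ, (M 1 1*M 2 2*M 3 3 - M 1 1*M 2 3*M 3 2 - M 1 2*M 2 1*M 3 3 + M 1 2*M 2 3*M 3 1 + M 1 3*M 2 1*M 3 2 - M 1 3*M 2 2*M 3 1) = x := ⟨_, rfl⟩
  obtain ⟨DP, hDP⟩ : ∃ x : ℝ, (((1 + M 0 0) * M 1 1 - M 1 0 * M 0 1)*((1 + M 0 0) * M 2 2 - M 2 0 * M 0 2)*((1 + M 0 0) * M 3 3 - M 3 0 * M 0 3) - ((1 + M 0 0) * M 1 1 - M 1 0 * M 0 1)*((1 + M 0 0) * M 2 3 - M 2 0 * M 0 3)*((1 + M 0 0) * M 3 2 - M 3 0 * M 0 2) - ((1 + M 0 0) * M 1 2 - M 1 0 * M 0 2)*((1 + M 0 0) * M 2 1 - M 2 0 * M 0 1)*((1 + M 0 0) * M 3 3 - M 3 0 * M 0 3) + ((1 + M 0 0) * M 1 2 - M 1 0 * M 0 2)*((1 +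 M 0 0) * M 2 3 - M 2 0 * M 0 3)*((1 + M 0 0) * M 3 1 - M 3 0 * M 0 1) + ((1 + M 0 0) * M 1 3 - M 1 0 * M 0 3)*((1 + M 0 0) * M 2 1 - M 2 0 * M 0 1)*((1 + M 0 0) * M 3 2 - M 3 0 * M 0 2) - ((1 + M 0 0) * M 1 3 - M 1 0 * M 0 3)*((1 + M 0 0) * M 2 2 - M 2 0 * M 0 2)*((1 + M 0 0) * M 3 1 - M 3 0 * M 0 1)) = x := ⟨_, rfl⟩
  rw [hDA] at hgA hdetPlin
  rw [hDP] at hgP hdetPlin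
  have hadet2 : DA^2 = M 0 0^2 := by linear_combination hgA + F00
  have hdetP2 : DP^2 = (1 + M 0 0)^6 := by linear_combination hgP
  have htr : M.trace = M 0 0 + (M 1 1 + M 2 2 + M 3 3) := by
    simp [Matrix.trace, Fin.sum_univ_four, Matrix.diag]; ring
  constructor
  · have hge := orth3_scalar (1 + M 0 0) _ _ _ _ _ _ _ _ _ hc h00 h11 h22
    rw [heq] at hge
    rw [htr]
    exact trace_final_weak (M 0 0) _ _ h0 hcs (by linarith [hge])
  · intro hdet1
    rw [hdet1] at hdetPlin
    have hPdet : DP = (1 + M 0 0)^3 := det_pick (M 0 0) DA DP h0 hadet2 hdetPlin hdetP2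
    rw [← hDP] at hPdet
    have hge := so3_scalar (1 + M 0 0) _ _ _ _ _ _ _ _ _ hc h00 h01 h02 h11 h12 h22 hPdet
    rw [heq] at hge
    rw [htr]
    exact trace_final_strong (M 0 0) _ _ h0 hcs (by linarith [hge])
-- === group facts ===
lemma eta_sq : η * η = 1 := by
  ext i j
  fin_cases i <;> fin_cases j <;>
    simp [η, Matrix.mul_apply, Fin.sum_univ_four, Matrix.one_apply, Matrix.diagonal_apply]

lemma eta_symm : ηᵀ = η := by rw [η, Matrix.diagonal_transpose]

lemma eta_det : η.det = -1 := by
  simp [η, Matrix.det_diagonal, Fin.prod_univ_four]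

lemma lorentz_inv1 (L : Matrix (Fin 4) (Fin 4) ℝ) (hL : Lᵀ * η * L = η) :
    (η * Lᵀ * η) * L = 1 := by
  calc (η * Lᵀ * η) * L = η * (Lᵀ * η * L) := by simp only [Matrix.mul_assoc]
    _ = η * η := by rw [hL]
    _ = 1 := eta_sq

lemma lorentz_inv2 (L : Matrix (Fin 4) (Fin 4) ℝ) (hL : Lᵀ * η * L = η) :
    L * (η * Lᵀ * η) = 1 :=
  mul_eq_one_comm.mp (lorentz_inv1 L hL)

lemma lorentz_rowT (L : Matrix (Fin 4) (Fin 4) ℝ) (hL : Lᵀ * η * L = η) :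
    L * η * Lᵀ = η := by
  have h2 := lorentz_inv2 L hL
  calc L * η * Lᵀ = L * η * Lᵀ * (η * η) := by rw [eta_sq, Matrix.mul_one]
    _ = (L * (η * Lᵀ * η)) * η := by simp only [Matrix.mul_assoc]
    _ = η := by rw [h2, Matrix.one_mul]

lemma ortho_entry (a b x1 x2 x3 y1 y2 y3 : ℝ) (ha : 1 ≤ a) (hb : 1 ≤ b)
    (RA : x1*x1 + x2*x2 + x3*x3 = a*a - 1) (CB : y1*y1 + y2*y2 + y3*y3 = b*b - 1) :
    1 ≤ a*b + (x1*y1 + x2*y2 + x3*y3) := by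
  have lag : (a*a - 1)*(b*b - 1) - (x1*y1 + x2*y2 + x3*y3)^2
      = (x1*y2 - x2*y1)^2 + (x1*y3 - x3*y1)^2 + (x2*y3 - x3*y2)^2 := by
    linear_combination (-(a*a - 1))*CB - (y1*y1 + y2*y2 + y3*y3)*RA
  have hab : 1 ≤ a * b := by nlinarith
  by_contra hcon
  push_neg at hcon
  have h1 : 0 < -(x1*y1 + x2*y2 + x3*y3) - (a*b - 1) := by linarith
  have h2 : 0 < -(x1*y1 + x2*y2 + x3*y3) + (a*b - 1) := by linarith
  have h3 := mul_pos h1 h2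
  have h4 : (x1*y1 + x2*y2 + x3*y3)^2 ≤ (a*a - 1)*(b*b - 1) := by
    nlinarith [lag, sq_nonneg (x1*y2 - x2*y1), sq_nonneg (x1*y3 - x3*y1), sq_nonneg (x2*y3 - x3*y2)]
  nlinarith [h3, h4, sq_nonneg (a - b)]

lemma LorentzPO.mul' {A B : Matrix (Fin 4) (Fin 4) ℝ} (hA : LorentzPO A) (hB : LorentzPO B) :
    LorentzPO (A * B) := by
  obtain ⟨hA1, hA2, hA3⟩ := hA
  obtain ⟨hB1, hB2, hB3⟩ := hB
  refine ⟨?_, ?_, ?_⟩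
  · rw [Matrix.transpose_mul]
    calc Bᵀ * Aᵀ * η * (A * B) = Bᵀ * (Aᵀ * η * A) * B := by simp only [Matrix.mul_assoc]
      _ = Bᵀ * η * B := by rw [hA1]
      _ = η := hB1
  · rw [Matrix.det_mul, hA2, hB2, mul_one]
  · have hAr := Matrix.ext_iff.mpr (lorentz_rowT A hA1) 0 0
    have hBc := Matrix.ext_iff.mpr hB1 0 0
    simp [Matrix.mul_apply, η, Matrix.diagonal_apply, Fin.sum_univ_four] at hAr hBc
    have hent : (A * B) 0 0 = A 0 0 * B 0 0 + (A 0 1 * B 1 0 + A 0 2 * B 2 0 + A 0 3 * B 3 0) := by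
      simp [Matrix.mul_apply, Fin.sum_univ_four]; ring
    rw [hent]
    exact ortho_entry (A 0 0) (B 0 0) (A 0 1) (A 0 2) (A 0 3) (B 1 0) (B 2 0) (B 3 0)
      hA3 hB3 (by linear_combination -hAr) (by linear_combination -hBc)

lemma LorentzPO.transpose' {L : Matrix (Fin 4) (Fin 4) ℝ} (hL : LorentzPO L) :
    LorentzPO Lᵀ := by
  obtain ⟨h1, h2, h3⟩ := hL
  exact ⟨by rw [Matrix.transpose_transpose]; exact lorentz_rowT L h1,
    by rw [Matrix.det_transpose]; exact h2, h3⟩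

lemma LorentzPO.inv' {L : Matrix (Fin 4) (Fin 4) ℝ} (hL : LorentzPO L) :
    LorentzPO (η * Lᵀ * η) := by
  obtain ⟨h1, h2, h3⟩ := hL
  have hrow := lorentz_rowT L h1
  refine ⟨?_, ?_, ?_⟩
  · have ht : (η * Lᵀ * η)ᵀ = η * L * η := by
      rw [Matrix.transpose_mul, Matrix.transpose_mul, Matrix.transpose_transpose, eta_symm]
      simp only [Matrix.mul_assoc]
    rw [ht]
    have collapse : ∀ X : Matrix (Fin 4) (Fin 4) ℝ, X * η * η = X := fun X => by
      rw [Matrix.mul_assoc, eta_sq, Matrix.mul_one]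
    calc η * L * η * η * (η * Lᵀ * η) = η * L * η * η * η * Lᵀ * η := by
          simp only [Matrix.mul_assoc]
      _ = η * L * η * Lᵀ * η := by rw [collapse (η * L * η)]
      _ = η * (L * η * Lᵀ) * η := by simp only [Matrix.mul_assoc]
      _ = η * η * η := by rw [hrow]
      _ = η := by rw [eta_sq, Matrix.one_mul]
  · rw [Matrix.det_mul, Matrix.det_mul, Matrix.det_transpose, eta_det, h2]; norm_num
  · have : (η * Lᵀ * η) 0 0 = L 0 0 := by
      simp [Matrix.mul_apply, η, Matrix.diagonal_apply, Fin.sum_univ_four]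
    rw [this]; exact h3

def P4 : Matrix (Fin 4) (Fin 4) ℝ := Matrix.diagonal ![1, -1, -1, 1]
def P5 : Matrix (Fin 4) (Fin 4) ℝ := Matrix.diagonal ![1, 1, 1, -1]

lemma P4_lorentz : LorentzPO P4 := by
  refine ⟨?_, ?_, ?_⟩
  · ext i j
    fin_cases i <;> fin_cases j <;>
      simp [P4, η, Matrix.mul_apply, Fin.sum_univ_four, Matrix.diagonal_apply]
  · simp [P4, Matrix.det_diagonal, Fin.prod_univ_four]
  · simp [P4, Matrix.diagonal_apply]

lemma P5_eta : P5ᵀ * η * P5 = η := by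
  ext i j
  fin_cases i <;> fin_cases j <;>
    simp [P5, η, Matrix.mul_apply, Fin.sum_univ_four, Matrix.diagonal_apply]

-- the key scalar inequality for a LorentzPO matrix K
lemma key_ineq (K : Matrix (Fin 4) (Fin 4) ℝ) (hK : LorentzPO K) (s : Fin 4 → ℝ)
    (h1 : s 1 ≤ s 0) (h2 : s 2 ≤ s 1) (h3 : |s 3| ≤ s 2) :
    s 0 - s 1 - s 2 + s 3 ≤ s 0 * K 0 0 + s 1 * K 1 1 + s 2 * K 2 2 + s 3 * K 3 3 := by
  obtain ⟨hKL, hKdet, hK00⟩ := hK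
  obtain ⟨h3a, h3b⟩ := abs_le.mp h3
  have hKR := lorentz_rowT K hKL
  -- (A) trace ≥ 0
  have htrK : K.trace = K 0 0 + K 1 1 + K 2 2 + K 3 3 := by
    simp [Matrix.trace, Fin.sum_univ_four, Matrix.diag]
  have hA : 0 ≤ K 0 0 + K 1 1 + K 2 2 + K 3 3 := by
    have := (lorentz_trace K hKL hKR hK00).2 hKdet
    rwa [htrK] at this
  -- (B) via K * P5
  have hKP5L : (K * P5)ᵀ * η * (K * P5) = η := by
    rw [Matrix.transpose_mul]
    calc P5ᵀ * Kᵀ * η * (K * P5) = P5ᵀ * (Kᵀ * η * K) * P5 := by simp only [Matrix.mul_assoc]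
      _ = P5ᵀ * η * P5 := by rw [hKL]
      _ = η := P5_eta
  have hKP5ent : (K * P5) 0 0 = K 0 0 := by
    simp [P5, Matrix.mul_diagonal]
  have hKP5tr : (K * P5).trace = K 0 0 + K 1 1 + K 2 2 - K 3 3 := by
    simp [Matrix.trace, Fin.sum_univ_four, Matrix.diag, P5, Matrix.mul_diagonal]
    ring
  have hB : -2 ≤ K 0 0 + K 1 1 + K 2 2 - K 3 3 := by
    have := (lorentz_trace (K * P5) hKP5L (lorentz_rowT _ hKP5L) (by rw [hKP5ent]; exact hK00)).1
    rwa [hKP5tr] at this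
  -- (C) K00 + K11 ≥ 0
  have e11 := Matrix.ext_iff.mpr hKL 1 1
  have f00 := Matrix.ext_iff.mpr hKR 0 0
  simp [Matrix.mul_apply, η, Matrix.diagonal_apply, Fin.sum_univ_four] at e11 f00
  have hC : 0 ≤ K 0 0 + K 1 1 := by
    nlinarith [e11, f00, hK00, sq_nonneg (K 0 1), sq_nonneg (K 0 2), sq_nonneg (K 0 3),
      sq_nonneg (K 2 1), sq_nonneg (K 3 1), sq_nonneg (K 0 0 + K 1 1), sq_nonneg (K 0 0 - K 1 1)]
  -- combine
  have e1 : 0 ≤ (s 2 + s 3) * (K 0 0 + K 1 1 + K 2 2 + K 3 3) :=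
    mul_nonneg (by linarith) hA
  have e2 : 0 ≤ (s 2 - s 3) * (K 0 0 + K 1 1 + K 2 2 - K 3 3 + 2) :=
    mul_nonneg (by linarith) (by linarith)
  have e3 : 0 ≤ (s 1 - s 2) * (K 0 0 + K 1 1) := mul_nonneg (by linarith) hC
  have e4 : 0 ≤ (s 0 - s 1) * (K 0 0 - 1) := mul_nonneg (by linarith) (by linarith)
  nlinarith [e1, e2, e3, e4]

theorem lsv_variational_trace (R : Matrix (Fin 4) (Fin 4) ℝ) (s : Fin 4 → ℝ)
    (h : HasLSV R s) :
    IsLeast {x : ℝ | ∃ L1 L2 : Matrix (Fin 4) (Fin 4) ℝ,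
        LorentzPO L1 ∧ LorentzPO L2 ∧ x = (L1 * R * L2ᵀ).trace}
      (s 0 - s 1 - s 2 + s 3) := by
  obtain ⟨h1, h2, h3, M1, M2, hM1, hM2, rfl⟩ := h
  constructor
  · -- membership
    refine ⟨P4 * (η * M1ᵀ * η), η * M2ᵀ * η, P4_lorentz.mul' hM1.inv', hM2.inv', ?_⟩
    have ht2 : (η * M2ᵀ * η)ᵀ = η * M2 * η := by
      rw [Matrix.transpose_mul, Matrix.transpose_mul, Matrix.transpose_transpose, eta_symm]
      simp only [Matrix.mul_assoc]
    have c2 : M2ᵀ * (η * (M2 * η)) = 1 := by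
      have : M2ᵀ * (η * (M2 * η)) = (M2ᵀ * η * M2) * η := by simp only [Matrix.mul_assoc]
      rw [this, hM2.1, eta_sq]
    have c1 := lorentz_inv1 M1 hM1.1
    have key : (P4 * (η * M1ᵀ * η)) * (M1 * Matrix.diagonal s * M2ᵀ) * (η * M2ᵀ * η)ᵀ
        = P4 * Matrix.diagonal s := by
      rw [ht2]
      calc (P4 * (η * M1ᵀ * η)) * (M1 * Matrix.diagonal s * M2ᵀ) * (η * M2 * η)
          = P4 * ((η * M1ᵀ * η * M1) * (Matrix.diagonal s * (M2ᵀ * (η * (M2 * η))))) := by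
            simp only [Matrix.mul_assoc]
        _ = P4 * (Matrix.diagonal s) := by rw [c1, c2, Matrix.one_mul, Matrix.mul_one]
    rw [key, P4]
    rw [Matrix.diagonal_mul_diagonal]
    simp [Matrix.trace, Matrix.diag, Matrix.diagonal_apply, Fin.sum_univ_four]
    ring
  · -- lower bound
    rintro x ⟨L1, L2, hL1, hL2, rfl⟩
    have hKlo : LorentzPO (((L2 * M2)ᵀ) * (L1 * M1)) :=
      ((hL2.mul' hM2).transpose').mul' (hL1.mul' hM1)
    have hassoc : L1 * (M1 * Matrix.diagonal s * M2ᵀ) * L2ᵀ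
        = (L1 * M1) * (Matrix.diagonal s * (L2 * M2)ᵀ) := by
      rw [Matrix.transpose_mul]
      simp only [Matrix.mul_assoc]
    have htrace : (L1 * (M1 * Matrix.diagonal s * M2ᵀ) * L2ᵀ).trace
        = (Matrix.diagonal s * (((L2 * M2)ᵀ) * (L1 * M1))).trace := by
      rw [hassoc, Matrix.trace_mul_comm]
      congr 1
      simp only [Matrix.mul_assoc]
    rw [htrace]
    set K := ((L2 * M2)ᵀ) * (L1 * M1) with hKdef
    have : (Matrix.diagonal s * K).trace
        = s 0 * K 0 0 + s 1 * K 1 1 + s 2 * K 2 2 + s 3 * K 3 3 := by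
      simp [Matrix.trace, Matrix.diag, Matrix.diagonal_mul, Fin.sum_univ_four]
    rw [this]
    exact key_ineq K hKlo s h1 h2 h3
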